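/- Error decomposition for warm-started kernel gradient updates. Let K be an N×N real symmetric positive semidefinite matrix with eigendecomposition K = U Λ Uᵀ, where U is orthogonal and Λ = diag(λ₁,…,λ_N) with λ₁ ≥ … ≥ λ_r > 0 and λ_j = 0 for j > r. Let ε > 0, let e = v* + w with v*, w ∈ ℝ^N, let (δ_τ)_{τ≥0} be vectors in ℝ^N, and define the sequence g₀ = 0, g_{τ+1} = (I − εK) g_τ + εK e + ε δ_τ. Set S^τ := (I − εΛ)^τ, ζ*_j := (1/√N)[Uᵀ v*]_j, and δ̃_i := Uᵀ δ_i. Then for every τ ≥ 0, (1/N)‖g_τ − v*‖₂² ≤ 2 Σ_{j=1}^{r} (S^τ_{jj})² (ζ*_j)² + 2 Σ_{j=r+1}^{N} (ζ*_j)² + (4/N) Σ_{j=1}^{r} (1 − S^τ_{jj})² [Uᵀ w]_j² + (4ε²/N) ‖Σ_{i=0}^{τ−1} S^{τ−1−i} δ̃_i‖₂². -/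

import Mathlib

open Finset Matrix

/-- Error decomposition for warm-started kernel gradient updates (Lemma 1). -/
theorem error_decomposition
    (N r : ℕ) (hN : 0 < N) (hrN : r ≤ N)
    (K U : Matrix (Fin N) (Fin N) ℝ)
    (lam : Fin N → ℝ)
    (hKsymm : K.IsSymm) (hKpsd : K.PosSemidef)
    (hU1 : U * Uᵀ = 1) (hU2 : Uᵀ * U = 1)
    (hdecomp : K = U * Matrix.diagonal lam * Uᵀ)
    (hanti : ∀ i j : Fin N, i ≤ j → lam j ≤ lam i)
    (hpos : ∀ j : Fin N, (j : ℕ) < r → 0 < lam j)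
    (hzero : ∀ j : Fin N, r ≤ (j : ℕ) → lam j = 0)
    (ε : ℝ) (hε : 0 < ε)
    (e vstar w : Fin N → ℝ) (he : e = vstar + w)
    (δ : ℕ → Fin N → ℝ)
    (g : ℕ → Fin N → ℝ)
    (hg0 : g 0 = 0)
    (hgrec : ∀ τ : ℕ, g (τ + 1) =
      ((1 : Matrix (Fin N) (Fin N) ℝ) - ε • K).mulVec (g τ)
        + ε • K.mulVec e + ε • δ τ)
    (ζ : Fin N → ℝ)
    (hζ : ∀ j, ζ j = (Uᵀ.mulVec vstar) j / Real.sqrt N)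
    (δt : ℕ → Fin N → ℝ)
    (hδt : ∀ i, δt i = Uᵀ.mulVec (δ i)) :
    ∀ τ : ℕ,
      (1 / N : ℝ) * ∑ i, (g τ i - vstar i) ^ 2 ≤
        2 * ∑ j ∈ univ.filter (fun j : Fin N => (j : ℕ) < r),
              ((1 - ε * lam j) ^ τ) ^ 2 * (ζ j) ^ 2
        + 2 * ∑ j ∈ univ.filter (fun j : Fin N => r ≤ (j : ℕ)), (ζ j) ^ 2
        + (4 / N) * ∑ j ∈ univ.filter (fun j : Fin N => (j : ℕ) < r),
              (1 - (1 - ε * lam j) ^ τ) ^ 2 * (Uᵀ.mulVec w j) ^ 2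
        + (4 * ε ^ 2 / N) *
            ∑ j, (∑ i ∈ Finset.range τ,
              (1 - ε * lam j) ^ (τ - 1 - i) * δt i j) ^ 2 := by
  have hNR : (0:ℝ) < (N:ℝ) := by exact_mod_cast hN
  set vt := Uᵀ.mulVec vstar with hvt
  set wt := Uᵀ.mulVec w with hwt
  -- rotation of K
  have hUK : Uᵀ * K = Matrix.diagonal lam * Uᵀ := by
    rw [hdecomp, ← Matrix.mul_assoc, ← Matrix.mul_assoc, hU2, Matrix.one_mul]
  have hkey : ∀ x : Fin N → ℝ, ∀ j, Uᵀ.mulVec (K.mulVec x) j = lam j * (Uᵀ.mulVec x) j := by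
    intro x j
    rw [Matrix.mulVec_mulVec, hUK, ← Matrix.mulVec_mulVec, Matrix.mulVec_diagonal]
  -- closed form for the rotated iterates
  have hh : ∀ τ : ℕ, ∀ j, Uᵀ.mulVec (g τ) j =
      (1 - (1 - ε * lam j) ^ τ) * (vt j + wt j)
        + ε * ∑ i ∈ Finset.range τ, (1 - ε * lam j) ^ (τ - 1 - i) * δt i j := by
    intro τ
    induction τ with
    | zero =>
      intro j
      simp [hg0, Matrix.mulVec_zero]
    | succ τ ih =>
      intro j
      have h1 : Uᵀ.mulVec (g (τ + 1)) j
          = (1 - ε * lam j) * Uᵀ.mulVec (g τ) j + ε * lam j * (vt j + wt j)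
            + ε * δt τ j := by
        rw [hgrec τ]
        rw [Matrix.mulVec_add, Matrix.mulVec_add]
        have h2 : ((1 : Matrix (Fin N) (Fin N) ℝ) - ε • K).mulVec (g τ)
            = g τ - ε • K.mulVec (g τ) := by
          rw [Matrix.sub_mulVec, Matrix.one_mulVec, Matrix.smul_mulVec]
        rw [h2]
        simp only [Pi.add_apply, Matrix.mulVec_sub, Pi.sub_apply]
        rw [Matrix.mulVec_smul, Matrix.mulVec_smul]
        simp only [Pi.smul_apply, smul_eq_mul]
        rw [hkey (g τ) j, hkey e j]
        have he2 : Uᵀ.mulVec e j = vt j + wt j := by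
          rw [he, Matrix.mulVec_add]; rfl
        rw [he2, hδt, Matrix.mulVec_smul]
        simp only [Pi.smul_apply, smul_eq_mul]
        ring
      rw [h1, ih j]
      set s := 1 - ε * lam j with hs
      have hsum : ∑ i ∈ Finset.range (τ + 1), s ^ (τ + 1 - 1 - i) * δt i j
          = s * ∑ i ∈ Finset.range τ, s ^ (τ - 1 - i) * δt i j + δt τ j := by
        rw [Finset.sum_range_succ]
        have h0 : τ + 1 - 1 - τ = 0 := by omega
        rw [h0, pow_zero, one_mul, Finset.mul_sum]
        congr 1
        apply Finset.sum_congr rfl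
        intro i hi
        have hi' : i < τ := Finset.mem_range.mp hi
        have h3 : τ + 1 - 1 - i = (τ - 1 - i) + 1 := by omega
        rw [h3, pow_succ]
        ring
      rw [hsum, pow_succ]
      ring
  -- norm preservation under the rotation
  have hnorm : ∀ x : Fin N → ℝ, ∑ j, (Uᵀ.mulVec x j) ^ 2 = ∑ i, (x i) ^ 2 := by
    intro x
    have h1 : ∑ j, (Uᵀ.mulVec x j) ^ 2 = (Uᵀ.mulVec x) ⬝ᵥ (Uᵀ.mulVec x) := by
      simp [dotProduct, sq]
    have h2 : ∑ i, (x i) ^ 2 = x ⬝ᵥ x := by simp [dotProduct, sq]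
    rw [h1, h2]
    calc (Uᵀ.mulVec x) ⬝ᵥ (Uᵀ.mulVec x)
        = (x ᵥ* U) ⬝ᵥ (Uᵀ.mulVec x) := by rw [Matrix.mulVec_transpose]
      _ = ((x ᵥ* U) ᵥ* Uᵀ) ⬝ᵥ x := by rw [Matrix.dotProduct_mulVec]
      _ = (x ᵥ* (U * Uᵀ)) ⬝ᵥ x := by rw [Matrix.vecMul_vecMul]
      _ = x ⬝ᵥ x := by rw [hU1, Matrix.vecMul_one]
  intro τ
  -- abbreviations
  set a : Fin N → ℝ := fun j => (1 - ε * lam j) ^ τ * vt j with ha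
  set b : Fin N → ℝ := fun j => (1 - (1 - ε * lam j) ^ τ) * wt j with hb
  set c : Fin N → ℝ := fun j =>
    ε * ∑ i ∈ Finset.range τ, (1 - ε * lam j) ^ (τ - 1 - i) * δt i j with hc
  have hrot : ∀ j, Uᵀ.mulVec (g τ - vstar) j = - a j + b j + c j := by
    intro j
    rw [Matrix.mulVec_sub]
    simp only [Pi.sub_apply]
    rw [hh τ j]
    simp only [ha, hb, hc, ← hvt]
    ring
  have hsum1 : ∑ i, (g τ i - vstar i) ^ 2
      = ∑ j, (- a j + b j + c j) ^ 2 := by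
    rw [show (∑ i, (g τ i - vstar i) ^ 2) = ∑ i, ((g τ - vstar) i) ^ 2 from rfl,
      ← hnorm (g τ - vstar)]
    exact Finset.sum_congr rfl fun j _ => by rw [hrot j]
  have hpw : ∀ j : Fin N, (- a j + b j + c j) ^ 2
      ≤ 2 * (a j) ^ 2 + 4 * (b j) ^ 2 + 4 * (c j) ^ 2 := by
    intro j
    nlinarith [sq_nonneg (a j + b j + c j), sq_nonneg (b j - c j)]
  have hle : (1 / N : ℝ) * ∑ i, (g τ i - vstar i) ^ 2
      ≤ (1 / N : ℝ) * ∑ j, (2 * (a j) ^ 2 + 4 * (b j) ^ 2 + 4 * (c j) ^ 2) := by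
    rw [hsum1]
    apply mul_le_mul_of_nonneg_left _ (by positivity)
    exact Finset.sum_le_sum fun j _ => hpw j
  refine hle.trans_eq ?_
  -- now prove the RHS equality
  have hζsq : ∀ j, (ζ j) ^ 2 = (vt j) ^ 2 / N := by
    intro j
    rw [hζ j, div_pow, Real.sq_sqrt (Nat.cast_nonneg N)]
  have hsplit : ∀ f : Fin N → ℝ, ∑ j, f j
      = ∑ j ∈ univ.filter (fun j : Fin N => (j : ℕ) < r), f j
        + ∑ j ∈ univ.filter (fun j : Fin N => r ≤ (j : ℕ)), f j := by
    intro f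
    rw [← Finset.sum_filter_add_sum_filter_not univ (fun j : Fin N => (j : ℕ) < r) f]
    congr 1
    apply Finset.sum_congr _ (fun _ _ => rfl)
    apply Finset.filter_congr
    intro j _
    simp [not_lt]
  rw [Finset.sum_add_distrib, Finset.sum_add_distrib, mul_add, mul_add]
  congr 1
  · congr 1
    · -- bias terms
      rw [hsplit (fun j => 2 * (a j) ^ 2)]
      rw [mul_add]
      congr 1
      · rw [Finset.mul_sum, Finset.mul_sum]
        apply Finset.sum_congr rfl
        intro j _
        rw [hζsq j]
        simp only [ha]
        field_simp
      · rw [Finset.mul_sum, Finset.mul_sum]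
        apply Finset.sum_congr rfl
        intro j hj
        have hjr : r ≤ (j : ℕ) := by simpa using hj
        rw [hζsq j]
        simp only [ha, hzero j hjr]
        field_simp
        simp
    · -- variance terms
      have hz : ∑ j, 4 * (b j) ^ 2
          = ∑ j ∈ univ.filter (fun j : Fin N => (j : ℕ) < r), 4 * (b j) ^ 2 := by
        rw [hsplit (fun j => 4 * (b j) ^ 2)]
        have : ∑ j ∈ univ.filter (fun j : Fin N => r ≤ (j : ℕ)), 4 * (b j) ^ 2 = 0 := by
          apply Finset.sum_eq_zero
          intro j hj
          have hjr : r ≤ (j : ℕ) := by simpa using hj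
          simp [hb, hzero j hjr]
        rw [this, add_zero]
      rw [hz, Finset.mul_sum, Finset.mul_sum]
      apply Finset.sum_congr rfl
      intro j _
      simp only [hb, ← hwt]
      field_simp
  · -- difference term
    rw [Finset.mul_sum, Finset.mul_sum]
    apply Finset.sum_congr rfl
    intro j _
    simp only [hc]
    field_simp
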